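/- For every graph G, GA₁(G) ≥ δ·M₁(G)/(2Δ²), with equality if and only if G is regular. -/

import Mathlib

open Finset Real

variable {V : Type*}

noncomputable def edgeSum (G : SimpleGraph V) [Fintype V] [DecidableRel G.Adj]
    (f : ℝ → ℝ → ℝ) (hf : ∀ a b, f a b = f b a) : ℝ :=
  ∑ e ∈ G.edgeFinset,
    Sym2.lift ⟨fun u v => f (G.degree u) (G.degree v), fun u v => hf _ _⟩ e

noncomputable def GA1 (G : SimpleGraph V) [Fintype V] [DecidableRel G.Adj] : ℝ :=
  edgeSum G (fun x y => 2 * Real.sqrt (x * y) / (x + y))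
    (fun a b => by (try dsimp only); rw [mul_comm a b, add_comm a b])

noncomputable def M1 (G : SimpleGraph V) [Fintype V] [DecidableRel G.Adj] : ℝ :=
  ∑ u : V, (G.degree u : ℝ) ^ 2

noncomputable def M2 (G : SimpleGraph V) [Fintype V] [DecidableRel G.Adj] : ℝ :=
  edgeSum G (fun x y => x * y) (fun a b => mul_comm a b)

noncomputable def randic (G : SimpleGraph V) [Fintype V] [DecidableRel G.Adj] : ℝ :=
  edgeSum G (fun x y => 1 / Real.sqrt (x * y)) (fun a b => by (try dsimp only); rw [mul_comm a b])

noncomputable def genRandic (G : SimpleGraph V) [Fintype V] [DecidableRel G.Adj] (α : ℝ) : ℝ :=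
  edgeSum G (fun x y => (x * y) ^ α) (fun a b => by (try dsimp only); rw [mul_comm a b])

noncomputable def modZagreb (G : SimpleGraph V) [Fintype V] [DecidableRel G.Adj] : ℝ :=
  edgeSum G (fun x y => 1 / (x * y)) (fun a b => by (try dsimp only); rw [mul_comm a b])

noncomputable def NKstar (G : SimpleGraph V) [Fintype V] [DecidableRel G.Adj] : ℝ :=
  ∏ e ∈ G.edgeFinset,
    Sym2.lift ⟨fun u v => ((G.degree u : ℝ) * (G.degree v : ℝ)), fun u v => mul_comm _ _⟩ e

def GraphRegular (G : SimpleGraph V) [Fintype V] [DecidableRel G.Adj] : Prop :=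
  ∃ k, G.IsRegularOfDegree k

/-!
Since every vertex `u` lies on `d_u` edges, `M₁ = ∑_{uv ∈ E} (d_u + d_v)`, so both sides are
edge sums and it suffices to compare them edge by edge. For `δ ≤ d_u, d_v ≤ Δ` we have
`δ ≤ √(d_u d_v)` and `d_u + d_v ≤ 2Δ`, whence
`δ (d_u + d_v) / (2Δ²) ≤ δ / Δ ≤ 2√(d_u d_v) / (d_u + d_v)`.
Equality in the first step forces `d_u = d_v = Δ`, and then equality in the second forces
`δ = Δ`, i.e. regularity.
-/

namespace SimpleGraph

variable (G : SimpleGraph V) [Fintype V] [DecidableRel G.Adj]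

theorem sum_darts_fst_eq_sum_degree_smul {M : Type*} [AddCommMonoid M] (F : V → M) :
    ∑ d : G.Dart, F d.fst = ∑ v, G.degree v • F v := by
  classical
  rw [← Finset.sum_fiberwise_of_maps_to (t := univ) (g := fun d : G.Dart => d.fst)
    (fun _ _ => mem_univ _)]
  refine Finset.sum_congr rfl fun v _ => ?_
  rw [Finset.sum_congr rfl (g := fun _ => F v) (fun d hd => by rw [(mem_filter.mp hd).2]),
    sum_const]
  congr 1
  convert G.dart_fst_fiber_card_eq_degree v

theorem sum_darts_fst_eq_sum_edgeFinset {M : Type*} [AddCommMonoid M] (F : V → M) :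
    ∑ d : G.Dart, F d.fst =
      ∑ e ∈ G.edgeFinset, Sym2.lift ⟨fun u v => F u + F v, fun _ _ => add_comm _ _⟩ e := by
  classical
  rw [← Finset.sum_fiberwise_of_maps_to (t := G.edgeFinset) (g := fun d : G.Dart => d.edge)
    (fun d _ => mem_edgeFinset.mpr d.edge_mem)]
  refine Finset.sum_congr rfl fun e he => ?_
  induction e with
  | h u v =>
    let d : G.Dart := ⟨(u, v), mem_edgeFinset.mp he⟩
    rw [show ({d' : G.Dart | d'.edge = s(u, v)} : Finset _) = {d, d.symm} from d.edge_fiber,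
      sum_pair d.symm_ne.symm]
    rfl

theorem sum_edgeFinset_lift_add_eq_sum_degree_smul {M : Type*} [AddCommMonoid M] (F : V → M) :
    ∑ e ∈ G.edgeFinset, Sym2.lift ⟨fun u v => F u + F v, fun _ _ => add_comm _ _⟩ e =
      ∑ v, G.degree v • F v := by
  rw [← sum_darts_fst_eq_sum_edgeFinset, sum_darts_fst_eq_sum_degree_smul]

theorem graphRegular_iff_minDegree_eq_maxDegree [Nonempty V] :
    GraphRegular G ↔ G.minDegree = G.maxDegree := by
  constructor
  · rintro ⟨k, hk⟩
    rw [hk.minDegree_eq, hk.maxDegree_eq]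
  · intro h
    exact ⟨G.minDegree, fun v =>
      le_antisymm (h ▸ G.degree_le_maxDegree v) (G.minDegree_le_degree v)⟩

end SimpleGraph

section edgeSum

variable (G : SimpleGraph V) [Fintype V] [DecidableRel G.Adj]
  {f g : ℝ → ℝ → ℝ} {hf : ∀ a b, f a b = f b a} {hg : ∀ a b, g a b = g b a}

theorem edgeSum_le_edgeSum
    (hfg : ∀ u v, G.Adj u v → f (G.degree u) (G.degree v) ≤ g (G.degree u) (G.degree v)) :
    edgeSum G f hf ≤ edgeSum G g hg := by
  refine sum_le_sum fun e he => ?_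
  induction e with
  | h u v => exact hfg u v (G.mem_edgeFinset.mp he)

theorem edgeSum_eq_edgeSum_iff
    (hfg : ∀ u v, G.Adj u v → f (G.degree u) (G.degree v) ≤ g (G.degree u) (G.degree v)) :
    edgeSum G f hf = edgeSum G g hg ↔
      ∀ u v, G.Adj u v → f (G.degree u) (G.degree v) = g (G.degree u) (G.degree v) := by
  refine (sum_eq_sum_iff_of_le fun e he => ?_).trans ⟨fun h u v huv => ?_, fun h e he => ?_⟩
  · induction e with
    | h u v => exact hfg u v (G.mem_edgeFinset.mp he)
  · exact h s(u, v) (G.mem_edgeFinset.mpr huv)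
  · induction e with
    | h u v => exact h u v (G.mem_edgeFinset.mp he)

theorem mul_M1_eq_edgeSum (c : ℝ) :
    c * M1 G = edgeSum G (fun x y => c * (x + y)) (fun a b => by rw [add_comm]) := by
  have hM1 : M1 G = ∑ v, G.degree v • (G.degree v : ℝ) := by
    simp only [M1, nsmul_eq_mul, sq]
  rw [hM1, ← G.sum_edgeFinset_lift_add_eq_sum_degree_smul, mul_sum]
  refine sum_congr rfl fun e _ => ?_
  induction e with
  | h u v => rfl

end edgeSum

theorem le_sqrt_mul_of_le_of_le {δ x y : ℝ} (hδ : 0 ≤ δ) (hx : δ ≤ x) (hy : δ ≤ y) :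
    δ ≤ √(x * y) :=
  (le_sqrt hδ (by nlinarith)).mpr (by nlinarith)

theorem div_two_mul_sq_mul_add_le_div {δ Δ x y : ℝ} (hδ : 0 ≤ δ) (hΔ : 0 < Δ)
    (hxy : x + y ≤ 2 * Δ) : δ / (2 * Δ ^ 2) * (x + y) ≤ δ / Δ := by
  rw [div_mul_eq_mul_div, div_le_div_iff₀ (by positivity) hΔ]
  nlinarith [mul_le_mul_of_nonneg_left hxy (mul_nonneg hδ hΔ.le)]

theorem div_le_two_sqrt_mul_div_add {δ Δ x y : ℝ} (hδ : 0 ≤ δ) (hΔ : 0 < Δ) (hx : 0 < x)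
    (hy : 0 < y) (hδx : δ ≤ x) (hδy : δ ≤ y) (hxy : x + y ≤ 2 * Δ) :
    δ / Δ ≤ 2 * √(x * y) / (x + y) := by
  rw [div_le_div_iff₀ hΔ (by positivity)]
  nlinarith [mul_le_mul hxy (le_sqrt_mul_of_le_of_le hδ hδx hδy) hδ (by positivity)]

theorem div_two_mul_sq_mul_add_le_two_sqrt_mul_div_add {δ Δ x y : ℝ} (hδ : 0 ≤ δ)
    (hx : 0 < x) (hy : 0 < y) (hδx : δ ≤ x) (hδy : δ ≤ y) (hxΔ : x ≤ Δ) (hyΔ : y ≤ Δ) :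
    δ / (2 * Δ ^ 2) * (x + y) ≤ 2 * √(x * y) / (x + y) := by
  have hΔ : 0 < Δ := hx.trans_le hxΔ
  have hxy : x + y ≤ 2 * Δ := by linarith
  exact (div_two_mul_sq_mul_add_le_div hδ hΔ hxy).trans
    (div_le_two_sqrt_mul_div_add hδ hΔ hx hy hδx hδy hxy)

theorem div_two_mul_sq_mul_add_eq_two_sqrt_mul_div_add_iff {δ Δ x y : ℝ} (hδ : 0 ≤ δ)
    (hx : 0 < x) (hy : 0 < y) (hδx : δ ≤ x) (hδy : δ ≤ y) (hxΔ : x ≤ Δ) (hyΔ : y ≤ Δ) :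
    δ / (2 * Δ ^ 2) * (x + y) = 2 * √(x * y) / (x + y) ↔ δ = Δ := by
  have hΔ : 0 < Δ := hx.trans_le hxΔ
  have hxy : x + y ≤ 2 * Δ := by linarith
  constructor
  · intro h
    have hδpos : 0 < δ := by
      refine hδ.lt_of_ne fun h0 => ?_
      rw [← h0, zero_div, zero_mul] at h
      have : 0 < 2 * √(x * y) / (x + y) := by positivity
      linarith
    have hsum : x + y = 2 * Δ := by
      have h' : δ / (2 * Δ ^ 2) * (x + y) = δ / Δ := le_antisymm
        (div_two_mul_sq_mul_add_le_div hδ hΔ hxy)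
        (h ▸ div_le_two_sqrt_mul_div_add hδ hΔ hx hy hδx hδy hxy)
      field_simp at h'
      nlinarith
    obtain rfl : x = Δ := by linarith
    obtain rfl : y = x := by linarith
    rw [← sq, sqrt_sq hx.le] at h
    field_simp at h
    linarith
  · rintro rfl
    obtain rfl : x = δ := le_antisymm hxΔ hδx
    obtain rfl : y = x := le_antisymm hyΔ hδy
    rw [← sq, sqrt_sq hx.le]
    field_simp
    ring

theorem stmt3_general (G : SimpleGraph V) [Fintype V] [DecidableRel G.Adj]
    (hm : G.edgeFinset.Nonempty) :
    (G.minDegree : ℝ) * M1 G / (2 * (G.maxDegree : ℝ) ^ 2) ≤ GA1 G ∧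
      (GA1 G = (G.minDegree : ℝ) * M1 G / (2 * (G.maxDegree : ℝ) ^ 2) ↔ GraphRegular G) := by
  obtain ⟨a, b, hab⟩ : ∃ a b, G.Adj a b :=
    SimpleGraph.ne_bot_iff_exists_adj.mp (G.edgeFinset_nonempty.mp hm)
  have : Nonempty V := ⟨a⟩
  set δ : ℝ := (G.minDegree : ℝ)
  set Δ : ℝ := (G.maxDegree : ℝ)
  have hbound : δ * M1 G / (2 * Δ ^ 2) =
      edgeSum G (fun x y => δ / (2 * Δ ^ 2) * (x + y)) (fun x y => by rw [add_comm]) := by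
    rw [← mul_M1_eq_edgeSum]
    ring
  have hdeg : ∀ u v, G.Adj u v → (0 : ℝ) < G.degree u :=
    fun u v huv => Nat.cast_pos.mpr ((G.degree_pos_iff_exists_adj u).mpr ⟨v, huv⟩)
  have hδ : (0 : ℝ) ≤ δ := Nat.cast_nonneg _
  have hlow (u : V) : δ ≤ G.degree u := Nat.cast_le.mpr (G.minDegree_le_degree u)
  have hup (u : V) : (G.degree u : ℝ) ≤ Δ := Nat.cast_le.mpr (G.degree_le_maxDegree u)
  have hterm (u v : V) (huv : G.Adj u v) :=
    div_two_mul_sq_mul_add_le_two_sqrt_mul_div_add hδ (hdeg u v huv) (hdeg v u huv.symm)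
      (hlow u) (hlow v) (hup u) (hup v)
  have hterm_eq (u v : V) (huv : G.Adj u v) :=
    div_two_mul_sq_mul_add_eq_two_sqrt_mul_div_add_iff hδ (hdeg u v huv) (hdeg v u huv.symm)
      (hlow u) (hlow v) (hup u) (hup v)
  refine ⟨hbound ▸ edgeSum_le_edgeSum G hterm, ?_⟩
  rw [hbound, eq_comm]
  refine (edgeSum_eq_edgeSum_iff G hterm).trans ?_
  rw [G.graphRegular_iff_minDegree_eq_maxDegree, ← Nat.cast_inj (R := ℝ)]
  exact ⟨fun h => (hterm_eq a b hab).mp (h a b hab), fun h u v huv => (hterm_eq u v huv).mpr h⟩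

theorem stmt3 (G : SimpleGraph V) [Fintype V] [DecidableRel G.Adj]
    (hc : G.Connected) (hm : G.edgeFinset.Nonempty) :
    (G.minDegree : ℝ) * M1 G / (2 * (G.maxDegree : ℝ) ^ 2) ≤ GA1 G ∧
      (GA1 G = (G.minDegree : ℝ) * M1 G / (2 * (G.maxDegree : ℝ) ^ 2) ↔ GraphRegular G) :=
  stmt3_general G hm
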